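/- arXiv:2402.13248 — 4 statements merged into one kernel-verified Lean document; each statement's English description precedes it below -/
import Mathlib

section
/- Let h(t) be a polynomial of degree n and suppose gamma(u) is a polynomial such that h(t) = (1+t)^n * gamma(t/(1+t)^2) as rational functions. Then for every m >= 1, the coefficient gamma_m of u^m in gamma satisfies: m * gamma_m equals the coefficient of u^{m-1} in J'(u) * (1+u)^{2m}, where J(u) = h(u)/(1+u)^n is viewed as a formal power series (rational function expansion at u = 0). -/
/-!
With `w = X / (1 + X)^2` we have `J = γ(w)`, so `J' = ∑ₖ γₖ (wᵏ)'`. Differentiating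
`w (1 + X)^2 = X` gives `w' (1 + X)^3 = 1 - X`, so `(wᵏ)' (1 + X)^(2k+1) = k Xᵏ⁻¹ (1 - X)`.
The coefficient of `Xᵐ⁻¹` in `(wᵏ)' (1 + X)^(2m)` is therefore `0` for `k > m` (the factor
`Xᵏ⁻¹`), `m` for `k = m`, and for `k < m` the difference `C(2j+1, j+1) - C(2j+1, j) = 0`
with `j = m - k - 1`. This is Lagrange inversion for `w`, made explicit.
-/

open PowerSeries

namespace PowerSeries

theorem coeff_one_add_X_pow {R : Type*} [CommSemiring R] (n i : ℕ) :
    coeff i ((1 + X : R⟦X⟧) ^ n) = n.choose i := by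
  rw [show (1 + X : R⟦X⟧) ^ n = ((1 + Polynomial.X : Polynomial R) ^ n : Polynomial R) by simp,
    Polynomial.coeff_coe, Polynomial.coeff_one_add_X_pow]

theorem coeff_succ_one_sub_X_mul_one_add_X_pow {R : Type*} [CommRing R] (j : ℕ) :
    coeff (j + 1) ((1 - X : R⟦X⟧) * (1 + X) ^ (2 * j + 1)) = 0 := by
  rw [sub_mul, one_mul, map_sub, coeff_succ_X_mul, coeff_one_add_X_pow, coeff_one_add_X_pow,
    Nat.choose_symm_half, sub_self]

variable {K : Type*} [Field K]

theorem one_add_X_pow_mul_inv (n : ℕ) : (1 + X : K⟦X⟧) ^ n * ((1 + X) ^ n)⁻¹ = 1 :=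
  PowerSeries.mul_inv_cancel _ (by simp)

variable (K) in
noncomputable def gammaSubst : K⟦X⟧ := X * ((1 + X) ^ 2)⁻¹

theorem gammaSubst_mul_one_add_X_sq : gammaSubst K * (1 + X) ^ 2 = X := by
  rw [gammaSubst, mul_assoc, mul_comm _ ((1 + X) ^ 2), one_add_X_pow_mul_inv, mul_one]

theorem derivative_gammaSubst_mul_one_add_X_pow_three :
    d⁄dX K (gammaSubst K) * (1 + X) ^ 3 = 1 - X := by
  have h := congrArg (fun f => d⁄dX K f * (1 + X)) (gammaSubst_mul_one_add_X_sq (K := K))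
  simp only [Derivation.leibniz, derivative_pow, derivative_X, map_add, derivative_one,
    smul_eq_mul] at h
  linear_combination h - 2 * gammaSubst_mul_one_add_X_sq (K := K)

theorem derivative_gammaSubst_pow_succ_mul (k : ℕ) :
    d⁄dX K (gammaSubst K ^ (k + 1)) * (1 + X) ^ (2 * k + 3) = (k + 1) • (X ^ k * (1 - X)) := by
  calc d⁄dX K (gammaSubst K ^ (k + 1)) * (1 + X) ^ (2 * k + 3)
      = (k + 1) • ((gammaSubst K * (1 + X) ^ 2) ^ k *
          (d⁄dX K (gammaSubst K) * (1 + X) ^ 3)) := by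
        rw [derivative_pow, nsmul_eq_mul, mul_pow, ← pow_mul]; push_cast; ring
    _ = (k + 1) • (X ^ k * (1 - X)) := by
        rw [gammaSubst_mul_one_add_X_sq, derivative_gammaSubst_mul_one_add_X_pow_three]

theorem coeff_derivative_gammaSubst_pow_mul (k m : ℕ) :
    coeff m (d⁄dX K (gammaSubst K ^ k) * (1 + X) ^ (2 * (m + 1))) =
      if k = m + 1 then (m + 1 : K) else 0 := by
  obtain _ | k := k
  · simp
  have hD := derivative_gammaSubst_pow_succ_mul (K := K) k
  rcases lt_or_ge k m with hlt | hge
  · obtain ⟨j, rfl⟩ := Nat.exists_eq_add_of_lt hlt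
    rw [if_neg (by omega), show 2 * (k + j + 1 + 1) = (2 * k + 3) + (2 * j + 1) by ring,
      pow_add _ (2 * k + 3), ← mul_assoc, hD, smul_mul_assoc, mul_assoc, map_nsmul,
      show k + j + 1 = (j + 1) + k by ring,
      coeff_X_pow_mul, coeff_succ_one_sub_X_mul_one_add_X_pow, smul_zero]
  · obtain ⟨i, rfl⟩ := Nat.exists_eq_add_of_le hge
    have hA : ((1 + X : K⟦X⟧) ^ (2 * (m + i) + 3))⁻¹ * (1 + X) ^ (2 * (m + 1)) =
        ((1 + X) ^ (2 * i + 1))⁻¹ := by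
      rw [show 2 * (m + i) + 3 = 2 * (m + 1) + (2 * i + 1) by ring, pow_add,
        PowerSeries.mul_inv_rev, mul_assoc, PowerSeries.inv_mul_cancel _ (by simp), mul_one]
    rw [(eq_mul_inv_iff_mul_eq (by simp)).2 hD, mul_assoc, hA, smul_mul_assoc, map_nsmul, pow_add,
      mul_assoc, mul_assoc, coeff_X_pow_mul', if_pos le_rfl, Nat.sub_self,
      coeff_zero_eq_constantCoeff_apply]
    rcases i with _ | i <;> simp

end PowerSeries

theorem gamma_coeff_eq_coeff_derivative_general
    (n : ℕ) (h γ : Polynomial ℚ)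
    (hfe : (h : PowerSeries ℚ) =
      (1 + PowerSeries.X) ^ n *
        Polynomial.aeval (PowerSeries.X * (((1 + PowerSeries.X) ^ 2)⁻¹ : PowerSeries ℚ)) γ)
    (m : ℕ) (hm : 1 ≤ m) :
    (m : ℚ) * γ.coeff m =
      PowerSeries.coeff (R := ℚ) (m - 1)
        (PowerSeries.derivativeFun
            ((h : PowerSeries ℚ) * (((1 + PowerSeries.X) ^ n)⁻¹ : PowerSeries ℚ)) *
          (1 + PowerSeries.X) ^ (2 * m)) := by
  obtain ⟨m, rfl⟩ := Nat.exists_eq_add_of_le' hm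
  have hJ : (h : ℚ⟦X⟧) * ((1 + X) ^ n)⁻¹ = Polynomial.aeval (gammaSubst ℚ) γ := by
    rw [hfe, mul_right_comm, one_add_X_pow_mul_inv, one_mul, gammaSubst]
  have hdeg : γ.natDegree < γ.natDegree + m + 2 := by omega
  change _ = coeff m (d⁄dX ℚ _ * _)
  rw [hJ, Polynomial.aeval_eq_sum_range' hdeg, map_sum, Finset.sum_mul, map_sum]
  simp_rw [Derivation.map_smul, smul_mul_assoc, map_smul, coeff_derivative_gammaSubst_pow_mul,
    smul_eq_mul, mul_ite, mul_zero]
  rw [Finset.sum_ite_eq', if_pos (Finset.mem_range.2 (by omega))]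
  push_cast
  ring

/-- If `h(t) = (1+t)^n γ(t/(1+t)^2)`, then for `m ≥ 1`, `m·γₘ` is the coefficient of
`u^(m-1)` in `J'(u)(1+u)^(2m)`, where `J(u) = h(u)/(1+u)^n`. -/
theorem gamma_coeff_eq_coeff_derivative
    (n : ℕ) (h γ : Polynomial ℚ) (hn : h.natDegree = n)
    (hfe : (h : PowerSeries ℚ) =
      (1 + PowerSeries.X) ^ n *
        Polynomial.aeval (PowerSeries.X * (((1 + PowerSeries.X) ^ 2)⁻¹ : PowerSeries ℚ)) γ)
    (m : ℕ) (hm : 1 ≤ m) :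
    (m : ℚ) * γ.coeff m =
      PowerSeries.coeff (R := ℚ) (m - 1)
        (PowerSeries.derivativeFun
            ((h : PowerSeries ℚ) * (((1 + PowerSeries.X) ^ n)⁻¹ : PowerSeries ℚ)) *
          (1 + PowerSeries.X) ^ (2 * m)) :=
  gamma_coeff_eq_coeff_derivative_general n h γ hfe m hm
end

section
/- Let Delta be a (d-1)-dimensional simplicial complex with h-polynomial h(w) (of the complex of dimension d-1) and for each vertex p let h_{lk(p)}(w) be the h-polynomial of the link of p. Then (1-w) * h'(w) = sum_{p in V(Delta)} h_{lk(p)}(w) - d * h(w). -/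
open Finset Polynomial

variable {V : Type*} [Fintype V] [DecidableEq V]

/-- The `h`-polynomial of a set system `Δ`, with respect to the dimension parameter `d`:
`h(w) = ∑_{F ∈ Δ} w^|F| (1-w)^{d-|F|} = ∑_i f_{i-1} wⁱ (1-w)^{d-i}`. -/
noncomputable def hPoly (d : ℕ) (Δ : Finset (Finset V)) : Polynomial ℚ :=
  ∑ F ∈ Δ, Polynomial.X ^ F.card * (1 - Polynomial.X) ^ (d - F.card)

/-- The link of a vertex `p` in `Δ`: all `G` with `p ∉ G` and `G ∪ {p} ∈ Δ`. -/
def link (Δ : Finset (Finset V)) (p : V) : Finset (Finset V) :=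
  (Δ.filter (fun F => p ∈ F)).image (fun F => F.erase p)

/-- The vertex set of `Δ`. -/
def vertexSet (Δ : Finset (Finset V)) : Finset V :=
  Finset.univ.filter (fun p => {p} ∈ Δ)

/-! Each face `F` of `Δ` contributes `w^|F| (1-w)^{d-|F|}` to `h`. Applying `(1-w) ∂/∂w` to
this term gives `|F| w^{|F|-1} (1-w)^{d-|F|} - d w^|F| (1-w)^{d-|F|}`; the first part is, summed
over `F`, the sum over the vertices `p ∈ F` of the contribution of `F \ {p}` to `h_{lk(p)}`. -/

theorem one_sub_X_mul_derivative_X_pow_mul_one_sub_X_pow {R : Type*} [CommRing R] (c e : ℕ) :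
    (1 - X) * derivative ((X : R[X]) ^ c * (1 - X) ^ e) =
      (c : R[X]) * (X ^ (c - 1) * (1 - X) ^ e) - ((c + e : ℕ) : R[X]) * (X ^ c * (1 - X) ^ e) := by
  rcases c with _ | c <;> rcases e with _ | e <;>
    simp [derivative_pow] <;> ring

omit [Fintype V] in
theorem hPoly_link (d : ℕ) (Δ : Finset (Finset V)) (p : V) :
    hPoly (d - 1) (link Δ p) =
      ∑ F ∈ Δ.filter (p ∈ ·), (X : ℚ[X]) ^ (F.card - 1) * (1 - X) ^ (d - F.card) := by
  have erase_injOn : Set.InjOn (·.erase p) (Δ.filter (p ∈ ·) : Set (Finset V)) := by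
    intro F hF G hG h
    rw [mem_coe, mem_filter] at hF hG
    simpa only [insert_erase hF.2, insert_erase hG.2] using congrArg (insert p) h
  rw [hPoly, link, sum_image erase_injOn]
  refine sum_congr rfl fun F hF => ?_
  have hpF : p ∈ F := (mem_filter.1 hF).2
  have : 1 ≤ F.card := card_pos.2 ⟨p, hpF⟩
  rw [card_erase_of_mem hpF, show d - 1 - (F.card - 1) = d - F.card by omega]

theorem sum_vertexSet_sum_filter_mem {M : Type*} [AddCommMonoid M] (Δ : Finset (Finset V))
    (hvert : ∀ F ∈ Δ, ∀ p ∈ F, {p} ∈ Δ) (g : Finset V → M) :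
    ∑ p ∈ vertexSet Δ, ∑ F ∈ Δ.filter (p ∈ ·), g F = ∑ F ∈ Δ, F.card • g F := by
  rw [sum_comm' (t' := Δ) (s' := fun F => (vertexSet Δ).filter (· ∈ F))
    (fun p F => by simp only [mem_filter]; tauto)]
  refine sum_congr rfl fun F hF => ?_
  have : (vertexSet Δ).filter (· ∈ F) = F := by
    ext q
    simp only [vertexSet, mem_filter, mem_univ, true_and, and_iff_right_iff_imp]
    exact hvert F hF q
  rw [this, sum_const]

theorem sum_hPoly_link (d : ℕ) (Δ : Finset (Finset V)) (hvert : ∀ F ∈ Δ, ∀ p ∈ F, {p} ∈ Δ) :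
    ∑ p ∈ vertexSet Δ, hPoly (d - 1) (link Δ p) =
      ∑ F ∈ Δ, (F.card : ℚ[X]) * (X ^ (F.card - 1) * (1 - X) ^ (d - F.card)) := by
  simp only [hPoly_link, sum_vertexSet_sum_filter_mem Δ hvert, nsmul_eq_mul]

theorem one_sub_mul_derivative_hPoly_general
    (d : ℕ) (Δ : Finset (Finset V))
    (hdown : ∀ F ∈ Δ, ∀ G ⊆ F, G ∈ Δ)
    (hdim_le : ∀ F ∈ Δ, F.card ≤ d) :
    (1 - Polynomial.X) * Polynomial.derivative (hPoly d Δ) =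
      (∑ p ∈ vertexSet Δ, hPoly (d - 1) (link Δ p)) - (d : Polynomial ℚ) * hPoly d Δ := by
  rw [sum_hPoly_link d Δ fun F hF p hp => hdown F hF {p} (singleton_subset_iff.2 hp), hPoly,
    derivative_sum, mul_sum, mul_sum, ← sum_sub_distrib]
  refine sum_congr rfl fun F hF => ?_
  rw [one_sub_X_mul_derivative_X_pow_mul_one_sub_X_pow, Nat.add_sub_cancel' (hdim_le F hF)]

/-- For a `(d-1)`-dimensional simplicial complex `Δ`,
`(1-w) h'(w) = ∑_{p ∈ V(Δ)} h_{lk(p)}(w) - d h(w)`. -/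
theorem one_sub_mul_derivative_hPoly
    (d : ℕ) (Δ : Finset (Finset V))
    (hne : Δ.Nonempty)
    (hdown : ∀ F ∈ Δ, ∀ G ⊆ F, G ∈ Δ)
    (hdim_le : ∀ F ∈ Δ, F.card ≤ d)
    (hdim : ∃ F ∈ Δ, F.card = d) :
    (1 - Polynomial.X) * Polynomial.derivative (hPoly d Δ) =
      (∑ p ∈ vertexSet Δ, hPoly (d - 1) (link Δ p)) - (d : Polynomial ℚ) * hPoly d Δ :=
  one_sub_mul_derivative_hPoly_general d Δ hdown hdim_le
end

section
/- Let A(t) = a_0 + a_1 t + ... + a_d t^d, R(t) = t^d A(1/t), and B(t) = R(t+1). Define gamma_r(B) via r*gamma_r = [u^{r-1}] J'(u)(1+u)^{2r} with J(u) = B(u)/(1+u)^d. Then r * gamma_r(B) = - sum_{k=0}^{d} k * binom(2r - k - 1, r - 1) * a_k, where binom(2r-k-1, r-1) is the generalized binomial coefficient (possibly negative when 2r - k - 1 < 0). -/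
open PowerSeries Finset

/-- Generalized binomial coefficient `binom(m, j) = m(m-1)⋯(m-j+1)/j!` for integer `m`. -/
noncomputable def genChoose (m : ℤ) (j : ℕ) : ℝ :=
  (∏ i ∈ Finset.range j, ((m : ℝ) - i)) / (Nat.factorial j : ℝ)

/-! Dividing the shifted reciprocal `∑ aₖ (1+u)^(d-k)` by `(1+u)^d` gives `J = ∑ aₖ (1+u)^(-k)`,
so `J'(u) (1+u)^(2r) = -∑ k aₖ (1+u)^(2r-k-1)`. For every integer `m` the coefficient of `u^j`
in the binomial series `(1+u)^m` is `binom(m, j)`, which gives the formula. -/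

theorem genChoose_eq_ringChoose (m : ℤ) (j : ℕ) : genChoose m j = ((Ring.choose m j : ℤ) : ℝ) := by
  have h := Ring.descPochhammer_eq_factorial_smul_choose m j
  rw [← Polynomial.eval_eq_smeval, descPochhammer_eval_eq_prod_range, nsmul_eq_mul] at h
  rw [genChoose, div_eq_iff (by positivity)]
  exact_mod_cast h.trans (mul_comm _ _)

theorem Polynomial.reflect_eq_sum {R : Type*} [Semiring R] {d : ℕ} {A : Polynomial R}
    (hA : A.natDegree ≤ d) :
    A.reflect d = ∑ i ∈ range (d + 1), C (A.coeff i) * X ^ (d - i) := by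
  let reflectHom : Polynomial R →+ Polynomial R :=
    ⟨⟨reflect d, reflect_zero⟩, fun f g => reflect_add f g d⟩
  have h := map_sum reflectHom (fun i => C (A.coeff i) * X ^ i) (range (d + 1))
  rw [← A.as_sum_range_C_mul_X_pow' (Nat.lt_succ_of_le hA)] at h
  refine h.trans (sum_congr rfl fun i hi => ?_)
  rw [← revAt_le (Nat.le_of_lt_succ (mem_range.mp hi))]
  exact reflect_C_mul_X_pow d i

namespace PowerSeries

theorem derivative_binomialSeries {R A : Type*} [CommRing R] [BinomialRing R] [CommRing A]
    [Algebra R A] (r : R) :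
    d⁄dX A (binomialSeries A r) = r • binomialSeries A (r - 1) := by
  ext n
  have h := Ring.choose_smul_choose r (Nat.le_add_left 1 n)
  rw [Nat.choose_one_right, Ring.choose_one_right, Nat.add_sub_cancel, Nat.cast_one] at h
  rw [coeff_derivative, coeff_smul, binomialSeries_coeff, binomialSeries_coeff, smul_smul, ← h,
    smul_assoc, nsmul_eq_mul, Nat.cast_succ, mul_comm]

theorem inv_one_add_X_pow {k : Type*} [Field k] (n : ℕ) :
    ((1 + X) ^ n : k⟦X⟧)⁻¹ = binomialSeries k (-n : ℤ) := by
  rw [inv_eq_iff_mul_eq_one (by simp), ← binomialSeries_nat (R := ℤ), ← binomialSeries_add]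
  simp

theorem coe_reflect_comp_X_add_one_mul_inv {k : Type*} [Field k] {d : ℕ} {A : Polynomial k}
    (hA : A.natDegree ≤ d) :
    (((A.reflect d).comp (Polynomial.X + 1) : Polynomial k) : k⟦X⟧) * ((1 + X) ^ d)⁻¹ =
      ∑ i ∈ range (d + 1), A.coeff i • binomialSeries k (-i : ℤ) := by
  rw [Polynomial.reflect_eq_sum hA, inv_one_add_X_pow, Polynomial.sum_comp,
    ← Polynomial.coeToPowerSeries.ringHom_apply, map_sum, sum_mul]
  refine sum_congr rfl fun i hi => ?_
  have hexp : ((d - i : ℕ) : ℤ) + -d = -i := by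
    rw [Nat.cast_sub (Nat.le_of_lt_succ (mem_range.mp hi))]; ring
  simp only [Polynomial.coeToPowerSeries.ringHom_apply, Polynomial.mul_comp, Polynomial.C_comp,
    Polynomial.X_pow_comp, Polynomial.coe_mul, Polynomial.coe_C, Polynomial.coe_pow,
    Polynomial.coe_add, Polynomial.coe_X, Polynomial.coe_one, add_comm X 1, smul_eq_C_mul,
    ← binomialSeries_nat (R := ℤ), mul_assoc, ← binomialSeries_add, hexp]

end PowerSeries

theorem gamma_of_shifted_reciprocal_general
    (d r : ℕ)
    (A : Polynomial ℝ) (hA : A.natDegree ≤ d) :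
    PowerSeries.coeff (r - 1)
        (PowerSeries.derivativeFun
            ((((Polynomial.reflect d A).comp (Polynomial.X + 1) : Polynomial ℝ) : PowerSeries ℝ) *
              (((1 + PowerSeries.X) ^ d)⁻¹ : PowerSeries ℝ)) *
          (1 + PowerSeries.X) ^ (2 * r)) =
      -∑ k ∈ Finset.range (d + 1),
        (k : ℝ) * genChoose (2 * (r : ℤ) - k - 1) (r - 1) * A.coeff k := by
  change coeff (r - 1) (d⁄dX ℝ _ * _) = _
  rw [coe_reflect_comp_X_add_one_mul_inv hA, map_sum, sum_mul, map_sum, ← sum_neg_distrib]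
  refine sum_congr rfl fun k _ => ?_
  have hexp : -(k : ℤ) - 1 + (2 * r : ℕ) = 2 * r - k - 1 := by push_cast; ring
  rw [Derivation.map_smul, derivative_binomialSeries, ← binomialSeries_nat (R := ℤ),
    smul_mul_assoc, smul_mul_assoc, ← binomialSeries_add, hexp, coeff_smul, coeff_smul,
    binomialSeries_coeff, genChoose_eq_ringChoose]
  simp only [smul_eq_mul, zsmul_eq_mul, mul_one]
  push_cast
  ring

/-- For `A(t) = ∑ aₖ tᵏ`, `R(t) = t^d A(1/t)`, `B(t) = R(t+1)`, and
`r·γᵣ(B) = [u^{r-1}] J'(u)(1+u)^{2r}` with `J(u) = B(u)/(1+u)^d`, one has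
`r·γᵣ(B) = -∑_{k=0}^d k · binom(2r-k-1, r-1) · aₖ`. -/
theorem gamma_of_shifted_reciprocal
    (d r : ℕ) (hr : 1 ≤ r) (hrd : 2 * r ≤ d)
    (A : Polynomial ℝ) (hA : A.natDegree ≤ d) :
    PowerSeries.coeff (r - 1)
        (PowerSeries.derivativeFun
            ((((Polynomial.reflect d A).comp (Polynomial.X + 1) : Polynomial ℝ) : PowerSeries ℝ) *
              (((1 + PowerSeries.X) ^ d)⁻¹ : PowerSeries ℝ)) *
          (1 + PowerSeries.X) ^ (2 * r)) =
      -∑ k ∈ Finset.range (d + 1),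
        (k : ℝ) * genChoose (2 * (r : ℤ) - k - 1) (r - 1) * A.coeff k :=
  gamma_of_shifted_reciprocal_general d r A hA
end

section
/- Let B(u) = b_0 + ... + b_d u^d with sgn(b_k) = (-1)^k for all k (i.e. (-1)^k b_k >= 0), and define gamma_r by r*gamma_r = [u^{r-1}] ((1+u)B'(u) - dB(u))/(1+u)^{d-2r+1} for 1 <= r <= d/2. Then (-1)^r gamma_r >= 0. -/
open PowerSeries Finset

/-
Write `N = (1+u)B' - dB`, whose `i`-th coefficient is `(i+1) b_{i+1} - (d-i) b_i`. When the `b_k`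
alternate in sign and `deg B ≤ d`, so do the coefficients of `-N`; the coefficients
`(-1)^j binom(e+j, e)` of `(1+u)^{-(e+1)}` alternate as well, and a product of two power series with
alternating coefficients again has alternating coefficients. Hence `(-1)^{r-1} [u^{r-1}] (-N)(1+u)^{-(e+1)}`,
which is `(-1)^r r γ_r`, is nonnegative.
-/

theorem PowerSeries.coeff_inv_one_add_X_pow {k : Type*} [Field k] (e j : ℕ) :
    coeff j ((1 + X : k⟦X⟧) ^ (e + 1))⁻¹ = (-1) ^ j * (e + j).choose e := by
  have h_inv : ((1 + X : k⟦X⟧) ^ (e + 1))⁻¹ = rescale (-1) (invOneSubPow k (e + 1)).val := by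
    rw [PowerSeries.inv_eq_iff_mul_eq_one (by simp),
      show (1 + X : k⟦X⟧) = rescale (-1) (1 - X) by simp [sub_eq_add_neg],
      ← map_pow, ← map_mul, ← invOneSubPow_inv_eq_one_sub_pow, Units.val_inv, map_one]
  rw [h_inv, coeff_rescale, invOneSubPow_val_succ_eq_mk_add_choose, coeff_mk]

theorem PowerSeries.alternating_coeff_mul {R : Type*} [CommRing R] [PartialOrder R]
    [IsOrderedRing R] {f g : R⟦X⟧} (hf : ∀ n, 0 ≤ (-1) ^ n * coeff n f)
    (hg : ∀ n, 0 ≤ (-1) ^ n * coeff n g) (n : ℕ) : 0 ≤ (-1) ^ n * coeff n (f * g) := by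
  rw [coeff_mul, mul_sum]
  refine sum_nonneg fun ⟨i, j⟩ hij => ?_
  rw [HasAntidiagonal.mem_antidiagonal] at hij
  subst hij
  calc (0 : R) ≤ ((-1) ^ i * coeff i f) * ((-1) ^ j * coeff j g) := mul_nonneg (hf i) (hg j)
    _ = _ := by ring

theorem PowerSeries.alternating_coeff_inv_one_add_X_pow {k : Type*} [Field k] [LinearOrder k]
    [IsStrictOrderedRing k] (e j : ℕ) : 0 ≤ (-1) ^ j * coeff j ((1 + X : k⟦X⟧) ^ (e + 1))⁻¹ := by
  rw [coeff_inv_one_add_X_pow, ← mul_assoc, ← mul_pow, neg_one_mul, neg_neg, one_pow, one_mul]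
  positivity

namespace Polynomial

variable {R : Type*} [CommRing R]

theorem coeff_one_add_X_mul_derivative_sub (B : R[X]) (d i : ℕ) :
    ((1 + X) * derivative B - (d : R[X]) * B).coeff i =
      (i + 1) * B.coeff (i + 1) - (d - i) * B.coeff i := by
  rw [coeff_sub, add_mul, one_mul, coeff_add, ← C_eq_natCast, coeff_C_mul, coeff_derivative]
  cases i with
  | zero => simp
  | succ i => rw [coeff_X_mul, coeff_derivative]; push_cast; ring

theorem alternating_coeff_neg_one_add_X_mul_derivative_sub [LinearOrder R] [IsStrictOrderedRing R]
    {B : R[X]} {d : ℕ} (hdeg : B.natDegree ≤ d) (hB : ∀ i, 0 ≤ (-1) ^ i * B.coeff i) (i : ℕ) :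
    0 ≤ (-1) ^ i * (-((1 + X) * derivative B - (d : R[X]) * B)).coeff i := by
  rw [coeff_neg, coeff_one_add_X_mul_derivative_sub]
  rcases le_or_gt i d with hid | hdi
  · have hdi : (0 : R) ≤ d - i := sub_nonneg.mpr (by exact_mod_cast hid)
    calc (0 : R) ≤ (i + 1) * ((-1) ^ (i + 1) * B.coeff (i + 1)) + (d - i) * ((-1) ^ i * B.coeff i) :=
          add_nonneg (mul_nonneg (by positivity) (hB _)) (mul_nonneg hdi (hB i))
      _ = _ := by ring
  · simp [coeff_eq_zero_of_natDegree_lt (hdeg.trans_lt hdi),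
      coeff_eq_zero_of_natDegree_lt (hdeg.trans_lt (Nat.lt_succ_of_lt hdi))]

end Polynomial

theorem gamma_sign_of_alternating_coeffs_general
    (d r : ℕ) (hr : 1 ≤ r) (b : ℕ → ℝ)
    (hsgn : ∀ k, 0 ≤ (-1) ^ k * b k)
    (γ : ℝ)
    (hγ : (r : ℝ) * γ =
      PowerSeries.coeff (R := ℝ) (r - 1)
        ((((1 + Polynomial.X) * Polynomial.derivative
              (∑ k ∈ Finset.range (d + 1), Polynomial.C (b k) * Polynomial.X ^ k) -
            (d : Polynomial ℝ) *
              (∑ k ∈ Finset.range (d + 1), Polynomial.C (b k) * Polynomial.X ^ k) :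
            Polynomial ℝ) : PowerSeries ℝ) *
          (((1 + PowerSeries.X) ^ (d - 2 * r + 1))⁻¹ : PowerSeries ℝ))) :
    0 ≤ (-1) ^ r * γ := by
  set B : Polynomial ℝ := ∑ k ∈ range (d + 1), Polynomial.C (b k) * Polynomial.X ^ k
  have hdeg : B.natDegree ≤ d := Polynomial.natDegree_sum_le_of_forall_le _ _ fun k hk =>
    (Polynomial.natDegree_C_mul_X_pow_le _ _).trans (Nat.lt_succ_iff.mp (mem_range.mp hk))
  have hB : ∀ i, 0 ≤ (-1) ^ i * B.coeff i := fun i => by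
    simp only [B, Polynomial.finsetSum_coeff, Polynomial.coeff_C_mul_X_pow, sum_ite_eq, mem_range]
    split_ifs <;> simp [hsgn]
  set N : Polynomial ℝ := (1 + Polynomial.X) * Polynomial.derivative B - (d : Polynomial ℝ) * B
  have hN (i : ℕ) : 0 ≤ (-1) ^ i * coeff i ((-N : Polynomial ℝ) : ℝ⟦X⟧) := by
    rw [Polynomial.coeff_coe]
    exact Polynomial.alternating_coeff_neg_one_add_X_mul_derivative_sub hdeg hB i
  have h_prod := alternating_coeff_mul hN
    (alternating_coeff_inv_one_add_X_pow (d - 2 * r)) (r - 1)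
  obtain ⟨s, rfl⟩ : ∃ s, r = s + 1 := ⟨r - 1, by omega⟩
  rw [Nat.add_sub_cancel] at hγ h_prod
  rw [Polynomial.coe_neg, neg_mul, map_neg, ← hγ] at h_prod
  refine (mul_nonneg_iff_of_pos_left (show (0 : ℝ) < (s + 1 : ℕ) by positivity)).mp ?_
  linear_combination h_prod

/-- If `B(u) = ∑ bₖ uᵏ` with `sgn(bₖ) = (-1)^k` (i.e. `(-1)^k bₖ ≥ 0`), and `γᵣ` is defined by
`r·γᵣ = [u^{r-1}] ((1+u)B'(u) - dB(u))/(1+u)^{d-2r+1}` for `1 ≤ r ≤ d/2`, then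
`(-1)^r γᵣ ≥ 0`. -/
theorem gamma_sign_of_alternating_coeffs
    (d r : ℕ) (hr : 1 ≤ r) (hrd : 2 * r ≤ d) (b : ℕ → ℝ)
    (hsgn : ∀ k, 0 ≤ (-1) ^ k * b k)
    (γ : ℝ)
    (hγ : (r : ℝ) * γ =
      PowerSeries.coeff (R := ℝ) (r - 1)
        ((((1 + Polynomial.X) * Polynomial.derivative
              (∑ k ∈ Finset.range (d + 1), Polynomial.C (b k) * Polynomial.X ^ k) -
            (d : Polynomial ℝ) *
              (∑ k ∈ Finset.range (d + 1), Polynomial.C (b k) * Polynomial.X ^ k) :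
            Polynomial ℝ) : PowerSeries ℝ) *
          (((1 + PowerSeries.X) ^ (d - 2 * r + 1))⁻¹ : PowerSeries ℝ))) :
    0 ≤ (-1) ^ r * γ :=
  gamma_sign_of_alternating_coeffs_general d r hr b hsgn γ hγ
end
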